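/- Let S₁, S₂ be WMTS, ε ≥ 0, and let S₁' and S₂' be ε-relaxations of S₁ and S₂ respectively. Then d_m(S₁,S₂) − ε ≤ d_m(S₁,S₂') ≤ d_m(S₁,S₂) and d_m(S₁,S₂) ≤ d_m(S₁',S₂) ≤ d_m(S₁,S₂) + ε. -/

import Mathlib

open scoped ENNReal

namespace WMTSQuant

/-- A closed extended-integer interval `[lo, hi]` with `lo ∈ ℤ ∪ {-∞}`,
`hi ∈ ℤ ∪ {∞}` and `lo ≤ hi`. -/
structure EInterval where
  lo : EReal
  hi : EReal
  lo_mem : lo = ⊥ ∨ ∃ n : ℤ, lo = ((n : ℝ) : EReal)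
  hi_mem : hi = ⊤ ∨ ∃ n : ℤ, hi = ((n : ℝ) : EReal)
  lo_le_hi : lo ≤ hi

/-- Specification labels 𝕂 = Σ × 𝕀. -/
abbrev SLabel (Act : Type) := Act × EInterval

/-- The refinement order ⊑ on specification labels. -/
def LabelLE {Act : Type} (k k' : SLabel Act) : Prop :=
  k.1 = k'.1 ∧ k'.2.lo ≤ k.2.lo ∧ k.2.hi ≤ k'.2.hi

/-- Implementation labels: singleton integer intervals. -/
def IsImpLabel {Act : Type} (k : SLabel Act) : Prop :=
  ∃ n : ℤ, k.2.lo = ((n : ℝ) : EReal) ∧ k.2.hi = ((n : ℝ) : EReal)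

/-- Truncation of an extended real to `[0,∞]`. -/
noncomputable def erealToNNE (x : EReal) : ℝ≥0∞ :=
  if x = ⊤ then ⊤ else ENNReal.ofReal x.toReal

open Classical in
/-- The label distance d_𝕂. -/
noncomputable def dK {Act : Type} (k ℓ : SLabel Act) : ℝ≥0∞ :=
  if k.1 = ℓ.1 then erealToNNE (max (ℓ.2.lo - k.2.lo) (max (k.2.hi - ℓ.2.hi) 0)) else ⊤

/-- Weighted modal transition systems. -/
structure WMTS (Act : Type) where
  State : Type
  init : State
  may : State → SLabel Act → State → Prop
  must : State → SLabel Act → State → Prop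
  must_may : ∀ s k s', must s k s' → ∃ ℓ, LabelLE k ℓ ∧ may s ℓ s'

variable {Act : Type}

/-- Implementations: `must = may`, all labels singleton integer intervals. -/
def WMTS.IsImplementation (S : WMTS Act) : Prop :=
  (∀ s k s', S.may s k s' ↔ S.must s k s') ∧
    ∀ s k s', S.must s k s' → IsImpLabel k

/-- (Boolean) modal refinement `S₁ ≤ₘ S₂`. -/
def Refines (S₁ S₂ : WMTS Act) : Prop :=
  ∃ R : S₁.State → S₂.State → Prop, R S₁.init S₂.init ∧
    ∀ s₁ s₂, R s₁ s₂ →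
      (∀ k₁ t₁, S₁.may s₁ k₁ t₁ →
        ∃ k₂ t₂, S₂.may s₂ k₂ t₂ ∧ LabelLE k₁ k₂ ∧ R t₁ t₂) ∧
      (∀ k₂ t₂, S₂.must s₂ k₂ t₂ →
        ∃ k₁ t₁, S₁.must s₁ k₁ t₁ ∧ LabelLE k₁ k₂ ∧ R t₁ t₂)

/-- Implementation semantics ⟦S⟧. -/
def Impl (S : WMTS Act) : Set (WMTS Act) :=
  {I | I.IsImplementation ∧ Refines I S}

/-- The endofunction whose least fixed point is the modal refinement distance. -/
noncomputable def dmF (lam : ℝ≥0∞) (S₁ S₂ : WMTS Act) :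
    (S₁.State → S₂.State → ℝ≥0∞) →o (S₁.State → S₂.State → ℝ≥0∞) where
  toFun f := fun s₁ s₂ =>
    max
      (⨆ k₁, ⨆ t₁, ⨆ _ : S₁.may s₁ k₁ t₁,
        ⨅ k₂, ⨅ t₂, ⨅ _ : S₂.may s₂ k₂ t₂, dK k₁ k₂ + lam * f t₁ t₂)
      (⨆ k₂, ⨆ t₂, ⨆ _ : S₂.must s₂ k₂ t₂,
        ⨅ k₁, ⨅ t₁, ⨅ _ : S₁.must s₁ k₁ t₁, dK k₁ k₂ + lam * f t₁ t₂)
  monotone' := by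
    intro f g hfg s₁ s₂
    dsimp only
    gcongr with k₁ t₁ h k₂ t₂ h' k₂ t₂ h k₁ t₁ h' <;> exact hfg _ _

/-- The modal refinement distance between states. -/
noncomputable def dm (lam : ℝ≥0∞) (S₁ S₂ : WMTS Act) :
    S₁.State → S₂.State → ℝ≥0∞ :=
  OrderHom.lfp (dmF lam S₁ S₂)

/-- The modal refinement distance between systems. -/
noncomputable def dmInit (lam : ℝ≥0∞) (S₁ S₂ : WMTS Act) : ℝ≥0∞ :=
  dm lam S₁ S₂ S₁.init S₂.init

/-- The endofunction whose least fixed point is the implementation distance. -/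
noncomputable def diF (lam : ℝ≥0∞) (I₁ I₂ : WMTS Act) :
    (I₁.State → I₂.State → ℝ≥0∞) →o (I₁.State → I₂.State → ℝ≥0∞) where
  toFun f := fun i₁ i₂ =>
    max
      (⨆ k₁, ⨆ j₁, ⨆ _ : I₁.must i₁ k₁ j₁,
        ⨅ k₂, ⨅ j₂, ⨅ _ : I₂.must i₂ k₂ j₂, dK k₁ k₂ + lam * f j₁ j₂)
      (⨆ k₂, ⨆ j₂, ⨆ _ : I₂.must i₂ k₂ j₂,
        ⨅ k₁, ⨅ j₁, ⨅ _ : I₁.must i₁ k₁ j₁, dK k₁ k₂ + lam * f j₁ j₂)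
  monotone' := by
    intro f g hfg i₁ i₂
    dsimp only
    gcongr with k₁ t₁ h k₂ t₂ h' k₂ t₂ h k₁ t₁ h' <;> exact hfg _ _

/-- The implementation distance between states of implementations. -/
noncomputable def di (lam : ℝ≥0∞) (I₁ I₂ : WMTS Act) :
    I₁.State → I₂.State → ℝ≥0∞ :=
  OrderHom.lfp (diF lam I₁ I₂)

/-- The implementation distance between implementations. -/
noncomputable def diInit (lam : ℝ≥0∞) (I₁ I₂ : WMTS Act) : ℝ≥0∞ :=
  di lam I₁ I₂ I₁.init I₂.init

/-- The thorough refinement distance. -/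
noncomputable def dt (lam : ℝ≥0∞) (S₁ S₂ : WMTS Act) : ℝ≥0∞ :=
  ⨆ I₁ ∈ Impl S₁, ⨅ I₂ ∈ Impl S₂, diInit lam I₁ I₂


/-- Pointwise sum of intervals. -/
noncomputable def EInterval.add (I J : EInterval) : EInterval where
  lo := I.lo + J.lo
  hi := I.hi + J.hi
  lo_mem := by
    rcases I.lo_mem with h | ⟨n, h⟩
    · exact Or.inl (by rw [h, EReal.bot_add])
    · rcases J.lo_mem with h' | ⟨m, h'⟩
      · exact Or.inl (by rw [h', EReal.add_bot])
      · exact Or.inr ⟨n + m, by rw [h, h', ← EReal.coe_add]; norm_cast⟩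
  hi_mem := by
    rcases I.hi_mem with h | ⟨n, h⟩
    · exact Or.inl (by rw [h, EReal.top_add_of_ne_bot]
                       rcases J.hi_mem with h' | ⟨m, h'⟩ <;> simp [h'])
    · rcases J.hi_mem with h' | ⟨m, h'⟩
      · exact Or.inl (by rw [h', EReal.add_top_of_ne_bot]; simp [h])
      · exact Or.inr ⟨n + m, by rw [h, h', ← EReal.coe_add]; norm_cast⟩
  lo_le_hi := add_le_add I.lo_le_hi J.lo_le_hi

/-- Widening `I ± δ` of an interval. -/
noncomputable def EInterval.widen (I : EInterval) (δ : ℕ) : EInterval where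
  lo := I.lo - ((δ : ℝ) : EReal)
  hi := I.hi + ((δ : ℝ) : EReal)
  lo_mem := by
    rcases I.lo_mem with h | ⟨n, h⟩
    · exact Or.inl (by rw [h, EReal.bot_sub])
    · exact Or.inr ⟨n - δ, by rw [h, ← EReal.coe_sub]; norm_cast⟩
  hi_mem := by
    rcases I.hi_mem with h | ⟨n, h⟩
    · exact Or.inl (by rw [h, EReal.top_add_of_ne_bot]; exact EReal.coe_ne_bot _)
    · exact Or.inr ⟨n + δ, by rw [h, ← EReal.coe_add]; norm_cast⟩
  lo_le_hi := by
    refine le_trans ?_ (le_trans I.lo_le_hi ?_)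
    · rw [sub_eq_add_neg]
      nth_rewrite 2 [show I.lo = I.lo + 0 by rw [add_zero]]
      refine add_le_add le_rfl ?_
      rw [← EReal.coe_neg, ← EReal.coe_zero, EReal.coe_le_coe_iff]
      simp
    · nth_rewrite 1 [show I.hi = I.hi + 0 by rw [add_zero]]
      refine add_le_add le_rfl ?_
      rw [← EReal.coe_zero, EReal.coe_le_coe_iff]
      simp



/-- Symmetrization of a hemimetric. -/
noncomputable def symDist {α : Type*} (d : α → α → ℝ≥0∞) : α → α → ℝ≥0∞ :=
  fun x y => max (d x y) (d y x)

/-- Product distance. -/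
noncomputable def prodDist {α β : Type*} (d : α → α → ℝ≥0∞) (e : β → β → ℝ≥0∞) :
    α × β → α × β → ℝ≥0∞ :=
  fun p q => d p.1 q.1 + e p.2 q.2

/-- (Sequential) compactness of a set with respect to an `ℝ≥0∞`-valued distance. -/
def CompactIn {α : Type*} (d : α → α → ℝ≥0∞) (A : Set α) : Prop :=
  ∀ u : ℕ → α, (∀ n, u n ∈ A) →
    ∃ x ∈ A, ∃ φ : ℕ → ℕ, StrictMono φ ∧
      Filter.Tendsto (fun n => d x (u (φ n))) Filter.atTop (nhds 0)

/-- Compactly branching WMTS. -/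
def CompactlyBranching (lam : ℝ≥0∞) (S : WMTS Act) : Prop :=
  ∀ s : S.State,
    CompactIn (prodDist (symDist (dm lam S S)) (symDist dK))
      {p : S.State × SLabel Act | S.may s p.2 p.1} ∧
    CompactIn (prodDist (symDist (dm lam S S)) (symDist dK))
      {p : S.State × SLabel Act | S.must s p.2 p.1}

/-- Deterministic WMTS. -/
def Deterministic (S : WMTS Act) : Prop :=
  ∀ (s : S.State) (a : Act) (I₁ I₂ : EInterval) (t₁ t₂ : S.State),
    S.may s (a, I₁) t₁ → S.may s (a, I₂) t₂ → I₁ = I₂ ∧ t₁ = t₂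

/-- `S'` is an ε-relaxation of `S`. -/
def Relaxation (lam ε : ℝ≥0∞) (S S' : WMTS Act) : Prop :=
  Refines S S' ∧ dmInit lam S' S ≤ ε

/-- The ε-extended implementation semantics ⟦S⟧⁺ᵉ. -/
def ImplExt (lam ε : ℝ≥0∞) (S : WMTS Act) : Set (WMTS Act) :=
  {I | I.IsImplementation ∧ dmInit lam I S ≤ ε}

/-- The δ-widening S⁺δ of a WMTS. -/
noncomputable def WMTS.widen (S : WMTS Act) (δ : ℕ) : WMTS Act where
  State := S.State
  init := S.init
  may s k t := ∃ a I, S.may s (a, I) t ∧ k = (a, I.widen δ)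
  must s k t := ∃ a I, S.must s (a, I) t ∧ k = (a, I.widen δ)
  must_may := by
    rintro s k t ⟨a, I, h, rfl⟩
    obtain ⟨ℓ, hle, hmay⟩ := S.must_may _ _ _ h
    refine ⟨(ℓ.1, ℓ.2.widen δ), ⟨hle.1, ?_, ?_⟩, ℓ.1, ℓ.2, hmay, rfl⟩
    · exact EReal.sub_le_sub hle.2.1 le_rfl
    · exact add_le_add hle.2.2 le_rfl

/-- Definedness of label synchronization ⊕. -/
def OplusDefined (k ℓ : SLabel Act) : Prop := k.1 = ℓ.1

/-- Label synchronization ⊕ (adding the intervals). -/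
noncomputable def oplus (k ℓ : SLabel Act) : SLabel Act :=
  (k.1, k.2.add ℓ.2)

/-- Definedness of label quotient ⊖ (equal actions, the difference interval is a
valid extended-integer interval). -/
def OminusDefined (k ℓ : SLabel Act) : Prop :=
  k.1 = ℓ.1 ∧ k.2.lo - ℓ.2.lo ≤ k.2.hi - ℓ.2.hi ∧
    (k.2.lo - ℓ.2.lo = ⊥ ∨ ∃ n : ℤ, k.2.lo - ℓ.2.lo = ((n : ℝ) : EReal)) ∧
    (k.2.hi - ℓ.2.hi = ⊤ ∨ ∃ n : ℤ, k.2.hi - ℓ.2.hi = ((n : ℝ) : EReal))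

/-- Label quotient ⊖. -/
noncomputable def ominus (k ℓ : SLabel Act) (h : OminusDefined k ℓ) : SLabel Act :=
  (k.1, ⟨k.2.lo - ℓ.2.lo, k.2.hi - ℓ.2.hi, h.2.2.1, h.2.2.2, h.2.1⟩)

/-- Structural composition S₁ ∥ S₂ (CSP-style synchronization, adding weights). -/
noncomputable def par (S₁ S₂ : WMTS Act) : WMTS Act where
  State := S₁.State × S₂.State
  init := (S₁.init, S₂.init)
  may p k q := ∃ k₁ k₂, S₁.may p.1 k₁ q.1 ∧ S₂.may p.2 k₂ q.2 ∧
    OplusDefined k₁ k₂ ∧ k = oplus k₁ k₂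
  must p k q := ∃ k₁ k₂, S₁.must p.1 k₁ q.1 ∧ S₂.must p.2 k₂ q.2 ∧
    OplusDefined k₁ k₂ ∧ k = oplus k₁ k₂
  must_may := by
    rintro p k q ⟨k₁, k₂, h₁, h₂, hd, rfl⟩
    obtain ⟨ℓ₁, hle₁, hmay₁⟩ := S₁.must_may _ _ _ h₁
    obtain ⟨ℓ₂, hle₂, hmay₂⟩ := S₂.must_may _ _ _ h₂
    refine ⟨oplus ℓ₁ ℓ₂, ⟨?_, ?_, ?_⟩,
      ℓ₁, ℓ₂, hmay₁, hmay₂, by rw [OplusDefined, ← hle₁.1, ← hle₂.1]; exact hd, rfl⟩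
    · exact hle₁.1
    · exact add_le_add hle₁.2.1 hle₂.2.1
    · exact add_le_add hle₁.2.2 hle₂.2.2

section Quotient

variable (S₁ S₂ : WMTS Act)

/-- May transitions of the (unpruned) quotient; `none` is the universal state u. -/
def qmay : Option (S₁.State × S₂.State) → SLabel Act → Option (S₁.State × S₂.State) → Prop
  | some p, k, some q =>
      (∃ k₁ k₂, ∃ h : OminusDefined k₁ k₂,
        S₁.may p.1 k₁ q.1 ∧ S₂.may p.2 k₂ q.2 ∧ k = ominus k₁ k₂ h) ∨
      (∃ k₁ k₂, ∃ h : OminusDefined k₁ k₂,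
        S₁.must p.1 k₁ q.1 ∧ S₂.must p.2 k₂ q.2 ∧ k = ominus k₁ k₂ h)
  | some p, k, none => ∀ k₂ t₂, S₂.may p.2 k₂ t₂ → ¬ OplusDefined k k₂
  | none, _, none => True
  | none, _, some _ => False

/-- Must transitions of the (unpruned) quotient. -/
def qmust : Option (S₁.State × S₂.State) → SLabel Act → Option (S₁.State × S₂.State) → Prop
  | some p, k, some q =>
      ∃ k₁ k₂, ∃ h : OminusDefined k₁ k₂,
        S₁.must p.1 k₁ q.1 ∧ S₂.must p.2 k₂ q.2 ∧ k = ominus k₁ k₂ h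
  | _, _, _ => False

/-- Inconsistent states of the quotient. -/
def QBad : Option (S₁.State × S₂.State) → Prop
  | some p => ∃ k₁ t₁, S₁.must p.1 k₁ t₁ ∧
      ∀ k₂ t₂, S₂.must p.2 k₂ t₂ → ¬ OminusDefined k₁ k₂
  | none => False

/-- States removed by pruning: those that can reach an inconsistent state via
must transitions (reflexive-transitive closure of `pre`). -/
def QPruned (p : Option (S₁.State × S₂.State)) : Prop :=
  ∃ q, Relation.ReflTransGen (fun x y => ∃ k, qmust S₁ S₂ x k y) p q ∧ QBad S₁ S₂ q

/-- The quotient S₁ ⫽ S₂, defined whenever the initial state survives pruning. -/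
noncomputable def quotient' (h : ¬ QPruned S₁ S₂ (some (S₁.init, S₂.init))) :
    WMTS Act where
  State := {p : Option (S₁.State × S₂.State) // ¬ QPruned S₁ S₂ p}
  init := ⟨some (S₁.init, S₂.init), h⟩
  may p k q := qmay S₁ S₂ p.1 k q.1
  must p k q := qmust S₁ S₂ p.1 k q.1
  must_may := by
    rintro ⟨p, hp⟩ k ⟨q, hq⟩ hmust
    refine ⟨k, ⟨rfl, le_rfl, le_rfl⟩, ?_⟩
    cases p with
    | none => exact hmust.elim
    | some p =>
      cases q with
      | none => exact hmust.elim
      | some q => exact Or.inr hmust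

end Quotient

/-- Formulae of the logic L. -/
inductive Formula (Act : Type) where
  | tt : Formula Act
  | ff : Formula Act
  | diam : SLabel Act → Formula Act → Formula Act
  | box : SLabel Act → Formula Act → Formula Act
  | and : Formula Act → Formula Act → Formula Act
  | or : Formula Act → Formula Act → Formula Act

/-- Disjunction-free formulae. -/
def Formula.DisjFree : Formula Act → Prop
  | .tt => True
  | .ff => True
  | .diam _ φ => φ.DisjFree
  | .box _ φ => φ.DisjFree
  | .and φ ψ => φ.DisjFree ∧ ψ.DisjFree
  | .or _ _ => False

/-- Quantitative semantics ⟦φ⟧ : S → [0,∞] of the logic L. -/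
noncomputable def sem (lam : ℝ≥0∞) (S : WMTS Act) : Formula Act → S.State → ℝ≥0∞
  | .tt, _ => 0
  | .ff, _ => ⊤
  | .and φ ψ, s => max (sem lam S φ s) (sem lam S ψ s)
  | .or φ ψ, s => min (sem lam S φ s) (sem lam S ψ s)
  | .diam ℓ φ, s =>
      ⨅ k, ⨅ t, ⨅ _ : S.must s k t ∧ dK k ℓ ≠ ⊤, dK k ℓ + lam * sem lam S φ t
  | .box ℓ φ, s =>
      ⨆ k, ⨆ t, ⨆ _ : S.may s k t ∧ dK k ℓ ≠ ⊤, dK k ℓ + lam * sem lam S φ t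

/-- ⟦φ⟧S = ⟦φ⟧s⁰. -/
noncomputable def semInit (lam : ℝ≥0∞) (S : WMTS Act) (φ : Formula Act) : ℝ≥0∞ :=
  sem lam S φ S.init

/-! The modal refinement distance is a hemimetric: it vanishes on modal refinements, since
the `0`/`⊤` indicator of a refinement relation is a pre-fixed point of `dmF`, and it satisfies
the triangle inequality, since composing two distances through the middle system is one as well.
Each of the four bounds is a triangle inequality through `S₁'` or `S₂'`. -/

lemma dK_of_fst_eq {k ℓ : SLabel Act} (h : k.1 = ℓ.1) :
    dK k ℓ = max (ℓ.2.lo - k.2.lo).toENNReal (k.2.hi - ℓ.2.hi).toENNReal := by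
  have hmono : Monotone EReal.toENNReal := fun _ _ => EReal.toENNReal_le_toENNReal
  rw [dK, if_pos h]
  -- `erealToNNE` is `EReal.toENNReal` unfolded.
  change EReal.toENNReal (max _ (max _ (0 : EReal))) = _
  rw [hmono.map_max, hmono.map_max, EReal.toENNReal_zero, max_eq_left zero_le]

lemma EReal.toENNReal_sub_le_add (a b c : EReal) :
    (a - c).toENNReal ≤ (a - b).toENNReal + (b - c).toENNReal := by
  induction a using EReal.rec <;> induction b using EReal.rec <;>
    induction c using EReal.rec
  case coe.coe.coe x y z =>
    simp only [← EReal.coe_sub, EReal.real_coe_toENNReal]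
    simpa using ENNReal.ofReal_add_le (p := x - y) (q := y - z)
  all_goals simp [EReal.toENNReal]

lemma dK_eq_zero_of_labelLE {k ℓ : SLabel Act} (h : LabelLE k ℓ) : dK k ℓ = 0 := by
  obtain ⟨hact, hlo, hhi⟩ := h
  rw [dK_of_fst_eq hact, EReal.toENNReal_of_nonpos (EReal.sub_nonpos.2 hlo),
    EReal.toENNReal_of_nonpos (EReal.sub_nonpos.2 hhi), max_self]

lemma dK_triangle (k₁ k₂ k₃ : SLabel Act) : dK k₁ k₃ ≤ dK k₁ k₂ + dK k₂ k₃ := by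
  by_cases h₁₂ : k₁.1 = k₂.1
  · by_cases h₂₃ : k₂.1 = k₃.1
    · rw [dK_of_fst_eq (h₁₂.trans h₂₃), dK_of_fst_eq h₁₂, dK_of_fst_eq h₂₃]
      refine max_le ?_ ?_
      · calc (k₃.2.lo - k₁.2.lo).toENNReal
            ≤ (k₂.2.lo - k₁.2.lo).toENNReal + (k₃.2.lo - k₂.2.lo).toENNReal := by
              rw [add_comm]; exact EReal.toENNReal_sub_le_add _ _ _
          _ ≤ _ := add_le_add (le_max_left _ _) (le_max_left _ _)
      · calc (k₁.2.hi - k₃.2.hi).toENNReal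
            ≤ (k₁.2.hi - k₂.2.hi).toENNReal + (k₂.2.hi - k₃.2.hi).toENNReal :=
              EReal.toENNReal_sub_le_add _ _ _
          _ ≤ _ := add_le_add (le_max_right _ _) (le_max_right _ _)
    · simp [dK, h₂₃]
  · simp [dK, h₁₂]

lemma ENNReal.iSup_iInf_le_add {α β γ : Type*} {A : Set α} {B : Set β} {C : Set γ}
    {f : α → γ → ℝ≥0∞} {g : α → β → ℝ≥0∞} {h : β → γ → ℝ≥0∞}
    (hfgh : ∀ a b c, f a c ≤ g a b + h b c) :
    ⨆ a ∈ A, ⨅ c ∈ C, f a c ≤ (⨆ a ∈ A, ⨅ b ∈ B, g a b) + ⨆ b ∈ B, ⨅ c ∈ C, h b c := by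
  refine iSup₂_le fun a ha => ?_
  calc ⨅ c ∈ C, f a c
      ≤ ⨅ b ∈ B, (g a b + ⨅ c ∈ C, h b c) := le_iInf₂ fun b _ => by
        simp_rw [ENNReal.add_iInf]
        exact iInf₂_mono fun c _ => hfgh a b c
    _ ≤ ⨅ b ∈ B, (g a b + ⨆ b ∈ B, ⨅ c ∈ C, h b c) :=
        iInf₂_mono fun b hb => add_le_add le_rfl (le_iSup₂_of_le b hb le_rfl)
    _ = (⨅ b ∈ B, g a b) + ⨆ b ∈ B, ⨅ c ∈ C, h b c := by simp_rw [ENNReal.iInf_add]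
    _ ≤ _ := add_le_add (le_iSup₂_of_le a ha le_rfl) le_rfl

def WMTS.maySucc (S : WMTS Act) (s : S.State) : Set (SLabel Act × S.State) :=
  {p | S.may s p.1 p.2}

def WMTS.mustSucc (S : WMTS Act) (s : S.State) : Set (SLabel Act × S.State) :=
  {p | S.must s p.1 p.2}

section ModalRefinementDistance

variable (lam : ℝ≥0∞) {S₁ S₂ S₃ : WMTS Act}

lemma dmF_apply (f : S₁.State → S₂.State → ℝ≥0∞) (s₁ : S₁.State) (s₂ : S₂.State) :
    dmF lam S₁ S₂ f s₁ s₂ =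
      max (⨆ p ∈ S₁.maySucc s₁, ⨅ q ∈ S₂.maySucc s₂, dK p.1 q.1 + lam * f p.2 q.2)
        (⨆ q ∈ S₂.mustSucc s₂, ⨅ p ∈ S₁.mustSucc s₁, dK p.1 q.1 + lam * f p.2 q.2) := by
  simp only [WMTS.maySucc, WMTS.mustSucc, Set.mem_ofPred_eq, iSup_prod (β := SLabel Act),
    iInf_prod (β := SLabel Act)]
  rfl

lemma dmF_dm : dmF lam S₁ S₂ (dm lam S₁ S₂) = dm lam S₁ S₂ :=
  OrderHom.map_lfp _

lemma dmF_comp_le (f : S₁.State → S₂.State → ℝ≥0∞) (g : S₂.State → S₃.State → ℝ≥0∞)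
    (s₁ : S₁.State) (s₂ : S₂.State) (s₃ : S₃.State) :
    dmF lam S₁ S₃ (fun u w => ⨅ v, f u v + g v w) s₁ s₃ ≤
      dmF lam S₁ S₂ f s₁ s₂ + dmF lam S₂ S₃ g s₂ s₃ := by
  have step : ∀ (p₁ : SLabel Act × S₁.State) (p₂ : SLabel Act × S₂.State)
      (p₃ : SLabel Act × S₃.State),
      dK p₁.1 p₃.1 + lam * ⨅ v, f p₁.2 v + g v p₃.2 ≤
        (dK p₁.1 p₂.1 + lam * f p₁.2 p₂.2) + (dK p₂.1 p₃.1 + lam * g p₂.2 p₃.2) := by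
    intro p₁ p₂ p₃
    calc _ ≤ (dK p₁.1 p₂.1 + dK p₂.1 p₃.1) + lam * (f p₁.2 p₂.2 + g p₂.2 p₃.2) :=
          add_le_add (dK_triangle _ _ _) (mul_le_mul_right (iInf_le _ p₂.2) _)
      _ = _ := by ring
  simp only [dmF_apply]
  refine max_le ?_ ?_
  · exact (ENNReal.iSup_iInf_le_add step).trans
      (add_le_add (le_max_left _ _) (le_max_left _ _))
  -- The must half is the may half with the roles of `S₁` and `S₃` exchanged.
  · exact (ENNReal.iSup_iInf_le_add fun p₃ p₂ p₁ => (step p₁ p₂ p₃).trans_eq (add_comm _ _)).trans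
      ((add_le_add (le_max_right _ _) (le_max_right _ _)).trans_eq (add_comm _ _))

lemma dm_triangle (s₁ : S₁.State) (s₂ : S₂.State) (s₃ : S₃.State) :
    dm lam S₁ S₃ s₁ s₃ ≤ dm lam S₁ S₂ s₁ s₂ + dm lam S₂ S₃ s₂ s₃ := by
  have hpre : dmF lam S₁ S₃ (fun u w => ⨅ v, dm lam S₁ S₂ u v + dm lam S₂ S₃ v w) ≤
      fun u w => ⨅ v, dm lam S₁ S₂ u v + dm lam S₂ S₃ v w := fun u w => le_iInf fun v => by
    simpa only [dmF_dm] using dmF_comp_le lam (dm lam S₁ S₂) (dm lam S₂ S₃) u v w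
  exact (OrderHom.lfp_le _ hpre s₁ s₃).trans (iInf_le _ s₂)

lemma dmInit_triangle (S₁ S₂ S₃ : WMTS Act) :
    dmInit lam S₁ S₃ ≤ dmInit lam S₁ S₂ + dmInit lam S₂ S₃ :=
  dm_triangle lam _ _ _

lemma dmInit_eq_zero_of_refines (h : Refines S₁ S₂) : dmInit lam S₁ S₂ = 0 := by
  classical
  obtain ⟨R, hinit, hR⟩ := h
  let f : S₁.State → S₂.State → ℝ≥0∞ := fun s₁ s₂ => if R s₁ s₂ then 0 else ⊤
  have matched : ∀ (k₁ k₂ : SLabel Act) t₁ t₂,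
      LabelLE k₁ k₂ → R t₁ t₂ → dK k₁ k₂ + lam * f t₁ t₂ = 0 := by
    intro k₁ k₂ t₁ t₂ hle hR
    simp [f, dK_eq_zero_of_labelLE hle, hR]
  have hpre : dmF lam S₁ S₂ f ≤ f := by
    intro s₁ s₂
    by_cases hr : R s₁ s₂
    · rw [dmF_apply, show f s₁ s₂ = 0 from if_pos hr]
      refine max_le (iSup₂_le fun p hp => ?_) (iSup₂_le fun q hq => ?_)
      · obtain ⟨k₂, t₂, hmay, hle, hRt⟩ := (hR s₁ s₂ hr).1 p.1 p.2 hp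
        exact iInf₂_le_of_le (k₂, t₂) hmay (matched _ _ _ _ hle hRt).le
      · obtain ⟨k₁, t₁, hmust, hle, hRt⟩ := (hR s₁ s₂ hr).2 q.1 q.2 hq
        exact iInf₂_le_of_le (k₁, t₁) hmust (matched _ _ _ _ hle hRt).le
    · simp [f, hr]
  refine le_antisymm ((OrderHom.lfp_le _ hpre _ _).trans ?_) zero_le
  simp [f, hinit]

end ModalRefinementDistance

theorem relaxation_distance_bounds_general {Act : Type} (lam : ℝ≥0∞) (ε : ℝ≥0∞)
    (S₁ S₂ S₁' S₂' : WMTS Act)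
    (h₁ : Relaxation lam ε S₁ S₁') (h₂ : Relaxation lam ε S₂ S₂') :
    dmInit lam S₁ S₂ - ε ≤ dmInit lam S₁ S₂' ∧
    dmInit lam S₁ S₂' ≤ dmInit lam S₁ S₂ ∧
    dmInit lam S₁ S₂ ≤ dmInit lam S₁' S₂ ∧
    dmInit lam S₁' S₂ ≤ dmInit lam S₁ S₂ + ε := by
  obtain ⟨hrefines₁, hclose₁⟩ := h₁
  obtain ⟨hrefines₂, hclose₂⟩ := h₂
  refine ⟨?_, ?_, ?_, ?_⟩
  · rw [tsub_le_iff_right]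
    exact (dmInit_triangle lam S₁ S₂' S₂).trans (add_le_add_right hclose₂ _)
  · simpa [dmInit_eq_zero_of_refines lam hrefines₂] using dmInit_triangle lam S₁ S₂ S₂'
  · simpa [dmInit_eq_zero_of_refines lam hrefines₁] using dmInit_triangle lam S₁ S₁' S₂
  · rw [add_comm]
    exact (dmInit_triangle lam S₁' S₁ S₂).trans (add_le_add_left hclose₁ _)

/-- distances to and from ε-relaxations. -/
theorem relaxation_distance_bounds {Act : Type} (lam : ℝ≥0∞)
    (hlam0 : 0 < lam) (hlam1 : lam < 1) (ε : ℝ≥0∞)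
    (S₁ S₂ S₁' S₂' : WMTS Act)
    (h₁ : Relaxation lam ε S₁ S₁') (h₂ : Relaxation lam ε S₂ S₂') :
    dmInit lam S₁ S₂ - ε ≤ dmInit lam S₁ S₂' ∧
    dmInit lam S₁ S₂' ≤ dmInit lam S₁ S₂ ∧
    dmInit lam S₁ S₂ ≤ dmInit lam S₁' S₂ ∧
    dmInit lam S₁' S₂ ≤ dmInit lam S₁ S₂ + ε :=
  relaxation_distance_bounds_general lam ε S₁ S₂ S₁' S₂' h₁ h₂

end WMTSQuant
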